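/- Let x* minimize ∑ᵢ αᵢ fᵢ(x) over the convex set C = {x : A x = b, H x ≤ g, fᵢ(x) ≤ rᵢ for all i}, where each fᵢ is convex and differentiable, αᵢ > 0, and Slater's condition holds. Then there exist weights ᾱᵢ > 0 such that x* also minimizes ∑ᵢ ᾱᵢ fᵢ(x) over {x : A x = b, H x ≤ g}. Specifically, ᾱᵢ = αᵢ + λᵢ* where λᵢ* ≥ 0 are the KKT multipliers of the constraints fᵢ(x) ≤ rᵢ. -/

import Mathlib

open Matrix Filter Topology

/-!
Put `F = ∑ αᵢ fᵢ` and `X = {x | A x = b, H x ≤ g}`. The strict value set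
`{(u, t) | ∃ x ∈ X, fᵢ x - rᵢ < uᵢ, F x < t}` is convex and open and misses `(0, F x*)`, so a
linear functional `(u, t) ↦ ∑ cᵢ uᵢ + c₀ t` separates them. The set is upward closed, which forces
`cᵢ ≤ 0` and `c₀ ≤ 0`, and Slater's point forces `c₀ ≠ 0`. Dividing by `c₀` gives multipliers
`λᵢ = cᵢ / c₀ ≥ 0` with `F x* ≤ F x + ∑ λᵢ (fᵢ x - rᵢ)` on `X`; since `λᵢ (fᵢ x* - rᵢ) ≤ 0`,
`x*` minimizes `∑ (αᵢ + λᵢ) fᵢ` over `X`.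
-/

theorem nonpos_of_forall_add_mul_lt {a b c : ℝ} (h : ∀ k : ℝ, 0 ≤ k → a + k * b < c) :
    b ≤ 0 := by
  by_contra! hb
  have := h (|c - a| / b) (by positivity)
  rw [div_mul_cancel₀ _ hb.ne'] at this
  linarith [le_abs_self (c - a)]

theorem le_of_forall_pos_add_mul_lt {a b c : ℝ} (h : ∀ ε : ℝ, 0 < ε → a + ε * b < c) :
    a ≤ c := by
  have hcont : Continuous fun ε : ℝ => a + ε * b := by fun_prop
  have hlim : Tendsto (fun ε : ℝ => a + ε * b) (𝓝[>] 0) (𝓝 a) := by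
    simpa using (hcont.tendsto 0).mono_left nhdsWithin_le_nhds
  exact le_of_tendsto hlim (eventually_nhdsWithin_of_forall fun ε hε => (h ε hε).le)

theorem ConvexOn.sum {𝕜 E ι : Type*} [Semiring 𝕜] [PartialOrder 𝕜] [AddCommMonoid E]
    [SMul 𝕜 E] {s : Set E} {t : Finset ι} {f : ι → E → ℝ} [Module 𝕜 ℝ] [IsOrderedModule 𝕜 ℝ]
    (hs : Convex 𝕜 s) (hf : ∀ i ∈ t, ConvexOn 𝕜 s (f i)) :
    ConvexOn 𝕜 s fun x => ∑ i ∈ t, f i x := by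
  classical
  induction t using Finset.induction_on with
  | empty => simpa using convexOn_const (0 : ℝ) hs
  | insert j t hj ih =>
    simp_rw [Finset.sum_insert hj]
    exact (hf j (t.mem_insert_self j)).add (ih fun i hi => hf i (Finset.mem_insert_of_mem hi))

theorem ConvexOn.apply_combo_lt {E : Type*} [AddCommGroup E] [Module ℝ E] {s : Set E}
    {φ : E → ℝ} (hφ : ConvexOn ℝ s φ) {x y : E} (hx : x ∈ s) (hy : y ∈ s) {a b u v : ℝ}
    (ha : 0 < a) (hb : 0 < b) (hab : a + b = 1) (hu : φ x < u) (hv : φ y < v) :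
    φ (a • x + b • y) < a * u + b * v :=
  calc φ (a • x + b • y) ≤ a * φ x + b * φ y := hφ.2 hx hy ha.le hb.le hab
    _ < a * u + b * v := by gcongr

theorem LinearMap.apply_prod_eq_sum {ι : Type*} [Fintype ι] [DecidableEq ι]
    (φ : (ι → ℝ) × ℝ →ₗ[ℝ] ℝ) (u : ι → ℝ) (t : ℝ) :
    φ (u, t) = ∑ i, u i * φ (Pi.single i 1, 0) + t * φ (0, 1) := by
  have hsplit : ((u, t) : (ι → ℝ) × ℝ) = LinearMap.inl ℝ _ ℝ u + t • (0, 1) := by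
    simp
  rw [hsplit, map_add, map_smul, smul_eq_mul, ← LinearMap.comp_apply,
    LinearMap.pi_apply_eq_sum_univ]
  congr 1
  refine Finset.sum_congr rfl fun i _ => ?_
  rw [smul_eq_mul, LinearMap.comp_apply, LinearMap.inl_apply]
  congr 3
  ext j
  simp [Pi.single_apply, eq_comm]

section StrictValueSet

variable {ι E : Type*} {X : Set E} {F : E → ℝ} {f : ι → E → ℝ}

/-- The interior of the set `𝒜` of Boyd–Vandenberghe, *Convex Optimization* §5.3, for minimizing
`F` over `X` subject to `fᵢ ≤ 0`. -/
def strictValueSet (X : Set E) (F : E → ℝ) (f : ι → E → ℝ) : Set ((ι → ℝ) × ℝ) :=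
  {p | ∃ x ∈ X, (∀ i, f i x < p.1 i) ∧ F x < p.2}

theorem convex_strictValueSet [AddCommGroup E] [Module ℝ E] (hF : ConvexOn ℝ X F)
    (hf : ∀ i, ConvexOn ℝ X (f i)) : Convex ℝ (strictValueSet X F f) := by
  refine convex_iff_forall_pos.2 ?_
  rintro _ ⟨x, hx, hfx, hFx⟩ _ ⟨y, hy, hfy, hFy⟩ a b ha hb hab
  exact ⟨a • x + b • y, hF.1 hx hy ha.le hb.le hab,
    fun i => (hf i).apply_combo_lt hx hy ha hb hab (hfx i) (hfy i),
    hF.apply_combo_lt hx hy ha hb hab hFx hFy⟩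

theorem isOpen_strictValueSet [Finite ι] : IsOpen (strictValueSet X F f) := by
  have : strictValueSet X F f =
      ⋃ x ∈ X, (⋂ i, {p : (ι → ℝ) × ℝ | f i x < p.1 i}) ∩ {p | F x < p.2} := by
    ext p
    simp only [strictValueSet, Set.mem_ofPred_eq, Set.mem_iUnion, Set.mem_inter_iff,
      Set.mem_iInter, exists_prop]
  rw [this]
  refine isOpen_biUnion fun x _ => (isOpen_iInter_of_finite fun i => ?_).inter ?_
  · exact isOpen_lt continuous_const ((continuous_apply i).comp continuous_fst)
  · exact isOpen_lt continuous_const continuous_snd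

theorem add_mem_strictValueSet {p v : (ι → ℝ) × ℝ} (hp : p ∈ strictValueSet X F f)
    (hv : 0 ≤ v) : p + v ∈ strictValueSet X F f := by
  obtain ⟨x, hx, hfx, hFx⟩ := hp
  exact ⟨x, hx, fun i => (hfx i).trans_le (le_add_of_nonneg_right (hv.1 i)),
    hFx.trans_le (le_add_of_nonneg_right hv.2)⟩

variable {φ : (ι → ℝ) × ℝ →ₗ[ℝ] ℝ} {C : ℝ}

theorem nonpos_of_lt_on_strictValueSet (hX : X.Nonempty)
    (hφ : ∀ p ∈ strictValueSet X F f, φ p < C) {v : (ι → ℝ) × ℝ} (hv : 0 ≤ v) : φ v ≤ 0 := by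
  obtain ⟨x, hx⟩ := hX
  set p : (ι → ℝ) × ℝ := ((fun i => f i x + 1), F x + 1)
  have hp : p ∈ strictValueSet X F f := ⟨x, hx, fun i => lt_add_one _, lt_add_one _⟩
  refine nonpos_of_forall_add_mul_lt (a := φ p) (c := C) fun k hk => ?_
  simpa using hφ _ (add_mem_strictValueSet hp (smul_nonneg hk hv))

theorem le_of_lt_on_strictValueSet (hφ : ∀ p ∈ strictValueSet X F f, φ p < C) {x : E}
    (hx : x ∈ X) : φ (fun i => f i x, F x) ≤ C := by
  refine le_of_forall_pos_add_mul_lt (b := φ (1, 1)) fun ε hε => ?_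
  have hmem : ((fun i => f i x, F x) + ε • (1, 1) : (ι → ℝ) × ℝ) ∈ strictValueSet X F f :=
    ⟨x, hx, fun i => by simpa using hε, by simpa using hε⟩
  have hlt := hφ _ hmem
  rwa [map_add, map_smul, smul_eq_mul] at hlt

theorem exists_lagrange_multipliers_of_slater [Fintype ι] [AddCommGroup E] [Module ℝ E]
    (hF : ConvexOn ℝ X F) (hf : ∀ i, ConvexOn ℝ X (f i)) (hslater : ∃ x₀ ∈ X, ∀ i, f i x₀ < 0)
    {m : ℝ} (hm : ∀ x ∈ X, (∀ i, f i x ≤ 0) → m ≤ F x) :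
    ∃ lam : ι → ℝ, (∀ i, 0 ≤ lam i) ∧ ∀ x ∈ X, m ≤ F x + ∑ i, lam i * f i x := by
  classical
  obtain ⟨x₀, hx₀, hfx₀⟩ := hslater
  have hm_notMem : ((0 : ι → ℝ), m) ∉ strictValueSet X F f := fun ⟨x, hx, hfx, hFx⟩ =>
    (hm x hx fun i => (hfx i).le).not_gt hFx
  obtain ⟨φ, hφ⟩ := geometric_hahn_banach_open_point (convex_strictValueSet hF hf)
    isOpen_strictValueSet hm_notMem
  have hsep : ∀ p ∈ strictValueSet X F f, φ.toLinearMap p < φ.toLinearMap (0, m) := hφ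
  set c : ι → ℝ := fun i => φ.toLinearMap (Pi.single i 1, 0)
  set c₀ : ℝ := φ.toLinearMap (0, 1)
  have hφ_apply : ∀ u t, φ.toLinearMap (u, t) = ∑ i, u i * c i + t * c₀ :=
    LinearMap.apply_prod_eq_sum _
  have hc : ∀ i, c i ≤ 0 := fun i =>
    nonpos_of_lt_on_strictValueSet ⟨x₀, hx₀⟩ hsep ⟨Pi.single_nonneg.2 zero_le_one, le_rfl⟩
  have hc₀ : c₀ ≤ 0 := nonpos_of_lt_on_strictValueSet ⟨x₀, hx₀⟩ hsep ⟨le_rfl, zero_le_one⟩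
  have hc₀_ne : c₀ ≠ 0 := by
    intro h₀
    have hmem : ((fun i => f i x₀ / 2), F x₀ + 1) ∈ strictValueSet X F f :=
      ⟨x₀, hx₀, fun i => by linarith [hfx₀ i], lt_add_one _⟩
    have hlt := hsep _ hmem
    simp only [hφ_apply, h₀, mul_zero, add_zero, Pi.zero_apply, zero_mul,
      Finset.sum_const_zero] at hlt
    exact hlt.not_ge (Finset.sum_nonneg fun i _ =>
      mul_nonneg_of_nonpos_of_nonpos (by linarith [hfx₀ i]) (hc i))
  have hc₀_neg : c₀ < 0 := hc₀.lt_of_ne hc₀_ne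
  refine ⟨fun i => c i / c₀, fun i => div_nonneg_of_nonpos (hc i) hc₀, fun x hx => ?_⟩
  have hkey := le_of_lt_on_strictValueSet hsep hx
  simp only [hφ_apply, Pi.zero_apply, zero_mul, Finset.sum_const_zero, zero_add] at hkey
  have hsum : ∑ i, c i / c₀ * f i x = (∑ i, f i x * c i) / c₀ := by
    rw [Finset.sum_div]
    exact Finset.sum_congr rfl fun i _ => by ring
  rw [hsum, ← sub_le_iff_le_add', le_div_iff_of_neg hc₀_neg]
  linarith

end StrictValueSet

theorem convex_setOf_mulVec_eq_and_le {m n k : Type*} [Fintype n] (A : Matrix m n ℝ) (b : m → ℝ)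
    (H : Matrix k n ℝ) (g : k → ℝ) :
    Convex ℝ {x : n → ℝ | A *ᵥ x = b ∧ ∀ j, (H *ᵥ x) j ≤ g j} :=
  ((convex_singleton b).linear_preimage A.mulVecLin).inter
    ((convex_Iic g).linear_preimage H.mulVecLin)

theorem scalarization_constraint_removal_general {n M p q : ℕ}
    (f : Fin M → (Fin n → ℝ) → ℝ)
    (hconv : ∀ i, ConvexOn ℝ Set.univ (f i))
    (A : Matrix (Fin p) (Fin n) ℝ) (b : Fin p → ℝ)
    (H : Matrix (Fin q) (Fin n) ℝ) (g : Fin q → ℝ)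
    (r : Fin M → ℝ) (α : Fin M → ℝ) (hα : ∀ i, 0 < α i)
    -- Slater's condition
    (hslater : ∃ x : Fin n → ℝ, A.mulVec x = b ∧ (∀ j, H.mulVec x j < g j) ∧
      ∀ i, f i x < r i)
    (xstar : Fin n → ℝ)
    (hfeas : A.mulVec xstar = b ∧ (∀ j, H.mulVec xstar j ≤ g j) ∧ ∀ i, f i xstar ≤ r i)
    (hmin : ∀ x : Fin n → ℝ, A.mulVec x = b → (∀ j, H.mulVec x j ≤ g j) →
      (∀ i, f i x ≤ r i) → ∑ i, α i * f i xstar ≤ ∑ i, α i * f i x) :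
    ∃ αbar : Fin M → ℝ, (∀ i, 0 < αbar i) ∧ (∃ lam : Fin M → ℝ, (∀ i, 0 ≤ lam i) ∧
      ∀ i, αbar i = α i + lam i) ∧
      ∀ x : Fin n → ℝ, A.mulVec x = b → (∀ j, H.mulVec x j ≤ g j) →
        ∑ i, αbar i * f i xstar ≤ ∑ i, αbar i * f i x := by
  have hX := convex_setOf_mulVec_eq_and_le A b H g
  have hconvX : ∀ i, ConvexOn ℝ _ (f i) := fun i => (hconv i).subset (Set.subset_univ _) hX
  obtain ⟨x₀, hx₀A, hx₀H, hx₀f⟩ := hslater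
  obtain ⟨lam, hlam, hlagrange⟩ := exists_lagrange_multipliers_of_slater
    (F := fun x => ∑ i, α i * f i x) (f := fun i x => f i x - r i)
    (ConvexOn.sum hX fun i _ => (hconvX i).smul (hα i).le)
    (fun i => (hconvX i).sub (concaveOn_const (r i) hX))
    ⟨x₀, ⟨hx₀A, fun j => (hx₀H j).le⟩, fun i => sub_neg.2 (hx₀f i)⟩
    fun x hx hfx => hmin x hx.1 hx.2 fun i => sub_nonpos.1 (hfx i)
  refine ⟨α + lam, fun i => add_pos_of_pos_of_nonneg (hα i) (hlam i),
    ⟨lam, hlam, fun _ => rfl⟩, fun x hxA hxH => ?_⟩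
  have hslack : ∑ i, lam i * (f i xstar - r i) ≤ 0 :=
    Finset.sum_nonpos fun i _ => mul_nonpos_of_nonneg_of_nonpos (hlam i)
      (sub_nonpos.2 (hfeas.2.2 i))
  have hx := hlagrange x ⟨hxA, hxH⟩
  simp only [Pi.add_apply, add_mul, mul_sub, Finset.sum_add_distrib, Finset.sum_sub_distrib]
    at hx hslack ⊢
  linarith

/-- If x* minimizes the scalarized objective over the set with extra objective-value
constraints (Slater's condition holding), then there are strictly positive weights ᾱ
for which x* minimizes the re-scalarized objective over the relaxed set. -/
theorem scalarization_constraint_removal {n M p q : ℕ}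
    (f : Fin M → (Fin n → ℝ) → ℝ)
    (hconv : ∀ i, ConvexOn ℝ Set.univ (f i))
    (hdiff : ∀ i, Differentiable ℝ (f i))
    (A : Matrix (Fin p) (Fin n) ℝ) (b : Fin p → ℝ)
    (H : Matrix (Fin q) (Fin n) ℝ) (g : Fin q → ℝ)
    (r : Fin M → ℝ) (α : Fin M → ℝ) (hα : ∀ i, 0 < α i)
    -- Slater's condition
    (hslater : ∃ x : Fin n → ℝ, A.mulVec x = b ∧ (∀ j, H.mulVec x j < g j) ∧
      ∀ i, f i x < r i)
    (xstar : Fin n → ℝ)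
    (hfeas : A.mulVec xstar = b ∧ (∀ j, H.mulVec xstar j ≤ g j) ∧ ∀ i, f i xstar ≤ r i)
    (hmin : ∀ x : Fin n → ℝ, A.mulVec x = b → (∀ j, H.mulVec x j ≤ g j) →
      (∀ i, f i x ≤ r i) → ∑ i, α i * f i xstar ≤ ∑ i, α i * f i x) :
    ∃ αbar : Fin M → ℝ, (∀ i, 0 < αbar i) ∧ (∃ lam : Fin M → ℝ, (∀ i, 0 ≤ lam i) ∧
      ∀ i, αbar i = α i + lam i) ∧
      ∀ x : Fin n → ℝ, A.mulVec x = b → (∀ j, H.mulVec x j ≤ g j) →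
        ∑ i, αbar i * f i xstar ≤ ∑ i, αbar i * f i x :=
  scalarization_constraint_removal_general f hconv A b H g r α hα hslater xstar hfeas hmin
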